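/- arXiv:2510.01358 — 4 statements merged into one kernel-verified Lean document; each statement's English description precedes it below -/
import Mathlib

section
/- An unbounded score yields a non-robust M-posterior: Let 𝒳 = ℝ, Θ ⊆ ℝ, and let ρ: ℝ×Θ→ℝ be a loss such that θ ↦ ρ(x,θ) is convex for every x and the score ψ(x,θ) = ∂ρ(x,θ)/∂θ satisfies lim_{x→+∞} ψ(x,θ) = +∞ and lim_{x→−∞} ψ(x,θ) = −∞ for every θ ∈ Θ. Assume the prior π is not degenerate (not concentrated at a single point), the M-posterior π_n^ρ(·|F_n) is well defined with finite first moment ∫_Θ |θ'| π_n^ρ(θ'|F_n)dθ' < ∞, and the posterior influence function PIF(x_0;θ,ρ,F_n) exists for all x_0, θ. Then the M-posterior is not uniformly B-robust: sup_{θ∈Θ} sup_{x_0∈ℝ} |PIF(x_0; θ, ρ, F_n)| = ∞. -/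
open MeasureTheory Filter

/-- Unnormalized density of the `ε`-contaminated M-posterior (one-dimensional case). -/
noncomputable def contamNum {n : ℕ} (w : ℝ → ℝ) (ρ : ℝ → ℝ → ℝ)
    (X : Fin n → ℝ) (x₀ : ℝ) (ε : ℝ) (θ : ℝ) : ℝ :=
  w θ * Real.exp (-((1 - ε) * ∑ i, ρ (X i) θ + ε * n * ρ x₀ θ))

/-- Density of the `ε`-contaminated M-posterior `π_n^ρ(θ | F_{n,ε,x₀})`; at `ε = 0` this is the
M-posterior `π_n^ρ(θ | F_n)`. -/
noncomputable def contamPost {n : ℕ} (Θ : Set ℝ) (w : ℝ → ℝ) (ρ : ℝ → ℝ → ℝ)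
    (X : Fin n → ℝ) (x₀ : ℝ) (ε : ℝ) (θ : ℝ) : ℝ :=
  contamNum w ρ X x₀ ε θ / ∫ t in Θ, contamNum w ρ X x₀ ε t

/- The contamination acts on the unnormalized density by the factor `exp (ε s_θ(x₀))`, with
`s_θ(x₀) = ∑ ρ(Xᵢ,θ) - n ρ(x₀,θ)`, and the normalizing constant cancels in the ratio of the
posterior densities at two parameters `θ₁ < θ₂`. Hence the logarithmic derivative of that ratio
in `ε`, namely `PIF(x₀;θ₁)/π(θ₁) - PIF(x₀;θ₂)/π(θ₂)`, equals `s_{θ₁}(x₀) - s_{θ₂}(x₀)`. A bounded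
PIF would bound this uniformly in `x₀`; but by convexity
`ρ(x₀,θ₂) - ρ(x₀,θ₁) ≥ ψ(x₀,θ₁)(θ₂ - θ₁) → ∞` as `x₀ → ∞`. -/

theorem tendsto_sub_atTop_of_convexOn {ρ ψ : ℝ → ℝ → ℝ} {a b : ℝ}
    (hconv : ∀ x, ConvexOn ℝ Set.univ (ρ x)) (hderiv : ∀ x, HasDerivAt (ρ x) (ψ x a) a)
    (hψ : Tendsto (fun x => ψ x a) atTop atTop) (hab : a < b) :
    Tendsto (fun x => ρ x b - ρ x a) atTop atTop := by
  refine tendsto_atTop_mono (fun x => ?_) (hψ.atTop_mul_const (sub_pos.mpr hab))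
  have hslope := (hconv x).le_slope_of_hasDerivAt (Set.mem_univ a) (Set.mem_univ b) hab
    (hderiv x)
  rwa [slope_def_field, le_div_iff₀ (sub_pos.mpr hab)] at hslope

theorem div_sub_div_eq_of_hasDerivWithinAt_div {f g : ℝ → ℝ} {f' g' L x : ℝ} {s : Set ℝ}
    (hf : HasDerivWithinAt f f' s x) (hg : HasDerivWithinAt g g' s x)
    (hs : UniqueDiffWithinAt ℝ s x) (hfx : f x ≠ 0) (hgx : g x ≠ 0)
    (hfg : HasDerivWithinAt (fun y => f y / g y) (f x / g x * L) s x) :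
    f' / f x - g' / g x = L := by
  have h := (hf.div hg hgx).derivWithin hs ▸ hfg.derivWithin hs
  field_simp at h ⊢
  linarith

section Contamination

variable {n : ℕ} {Θ : Set ℝ} {w : ℝ → ℝ} {ρ : ℝ → ℝ → ℝ} {X : Fin n → ℝ} {x₀ : ℝ}

noncomputable def contamLogSlope (ρ : ℝ → ℝ → ℝ) (X : Fin n → ℝ) (x₀ θ : ℝ) : ℝ :=
  ∑ i, ρ (X i) θ - n * ρ x₀ θ

theorem contamNum_eq_mul_exp (ε θ : ℝ) :
    contamNum w ρ X x₀ ε θ =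
      contamNum w ρ X x₀ 0 θ * Real.exp (ε * contamLogSlope ρ X x₀ θ) := by
  simp only [contamNum, contamLogSlope, mul_assoc, ← Real.exp_add]
  ring_nf

theorem contamPost_zero (x₁ θ : ℝ) :
    contamPost Θ w ρ X x₀ 0 θ = contamPost Θ w ρ X x₁ 0 θ := by
  simp [contamPost, contamNum]

theorem contamPost_pos {ε θ : ℝ} (hw : 0 < w θ) (hZ : 0 < ∫ t in Θ, contamNum w ρ X x₀ ε t) :
    0 < contamPost Θ w ρ X x₀ ε θ :=
  div_pos (mul_pos hw (Real.exp_pos _)) hZ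

theorem hasDerivWithinAt_contamPost_div (θ₁ θ₂ : ℝ)
    (hZ : ∀ ε ∈ Set.Icc (0 : ℝ) 1, ∫ t in Θ, contamNum w ρ X x₀ ε t ≠ 0) :
    HasDerivWithinAt (fun ε => contamPost Θ w ρ X x₀ ε θ₁ / contamPost Θ w ρ X x₀ ε θ₂)
      (contamPost Θ w ρ X x₀ 0 θ₁ / contamPost Θ w ρ X x₀ 0 θ₂ *
        (contamLogSlope ρ X x₀ θ₁ - contamLogSlope ρ X x₀ θ₂)) (Set.Ici 0) 0 := by
  set c := contamNum w ρ X x₀ 0 θ₁ / contamNum w ρ X x₀ 0 θ₂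
  set L := contamLogSlope ρ X x₀ θ₁ - contamLogSlope ρ X x₀ θ₂
  have hratio : ∀ ε ∈ Set.Icc (0 : ℝ) 1,
      contamPost Θ w ρ X x₀ ε θ₁ / contamPost Θ w ρ X x₀ ε θ₂ = c * Real.exp (ε * L) := by
    intro ε hε
    rw [contamPost, contamPost, div_div_div_cancel_right₀ (hZ ε hε), contamNum_eq_mul_exp ε θ₁,
      contamNum_eq_mul_exp ε θ₂, mul_div_mul_comm, ← Real.exp_sub, ← mul_sub]
  have h0 : (0 : ℝ) ∈ Set.Icc (0 : ℝ) 1 := ⟨le_rfl, zero_le_one⟩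
  have hexp : HasDerivAt (fun ε => c * Real.exp (ε * L)) (c * L) 0 := by
    simpa using (((hasDerivAt_id (0 : ℝ)).mul_const L).exp).const_mul c
  rw [hratio 0 h0, zero_mul, Real.exp_zero, mul_one]
  exact hexp.hasDerivWithinAt.congr_of_eventuallyEq
    (eventually_of_mem (Icc_mem_nhdsGE zero_lt_one) hratio) (hratio 0 h0)

theorem PIF_div_sub_PIF_div {PIF : ℝ → ℝ → ℝ} {θ₁ θ₂ : ℝ}
    (hPIF₁ : HasDerivWithinAt (fun ε => contamPost Θ w ρ X x₀ ε θ₁) (PIF x₀ θ₁) (Set.Ici 0) 0)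
    (hPIF₂ : HasDerivWithinAt (fun ε => contamPost Θ w ρ X x₀ ε θ₂) (PIF x₀ θ₂) (Set.Ici 0) 0)
    (hp₁ : contamPost Θ w ρ X x₀ 0 θ₁ ≠ 0) (hp₂ : contamPost Θ w ρ X x₀ 0 θ₂ ≠ 0)
    (hZ : ∀ ε ∈ Set.Icc (0 : ℝ) 1, ∫ t in Θ, contamNum w ρ X x₀ ε t ≠ 0) :
    PIF x₀ θ₁ / contamPost Θ w ρ X x₀ 0 θ₁ - PIF x₀ θ₂ / contamPost Θ w ρ X x₀ 0 θ₂ =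
      contamLogSlope ρ X x₀ θ₁ - contamLogSlope ρ X x₀ θ₂ :=
  div_sub_div_eq_of_hasDerivWithinAt_div hPIF₁ hPIF₂ (uniqueDiffOn_Ici 0 0 Set.self_mem_Ici)
    hp₁ hp₂ (hasDerivWithinAt_contamPost_div θ₁ θ₂ hZ)

theorem contamLogSlope_sub_le {PIF : ℝ → ℝ → ℝ} {C θ₁ θ₂ : ℝ}
    (hPIF₁ : HasDerivWithinAt (fun ε => contamPost Θ w ρ X x₀ ε θ₁) (PIF x₀ θ₁) (Set.Ici 0) 0)
    (hPIF₂ : HasDerivWithinAt (fun ε => contamPost Θ w ρ X x₀ ε θ₂) (PIF x₀ θ₂) (Set.Ici 0) 0)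
    (hC₁ : |PIF x₀ θ₁| ≤ C) (hC₂ : |PIF x₀ θ₂| ≤ C) (hw₁ : 0 < w θ₁) (hw₂ : 0 < w θ₂)
    (hZ : ∀ ε ∈ Set.Icc (0 : ℝ) 1, 0 < ∫ t in Θ, contamNum w ρ X x₀ ε t) :
    contamLogSlope ρ X x₀ θ₁ - contamLogSlope ρ X x₀ θ₂ ≤
      C / contamPost Θ w ρ X x₀ 0 θ₁ + C / contamPost Θ w ρ X x₀ 0 θ₂ := by
  have hp₁ := contamPost_pos (x₀ := x₀) hw₁ (hZ 0 ⟨le_rfl, zero_le_one⟩)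
  have hp₂ := contamPost_pos (x₀ := x₀) hw₂ (hZ 0 ⟨le_rfl, zero_le_one⟩)
  rw [← PIF_div_sub_PIF_div hPIF₁ hPIF₂ hp₁.ne' hp₂.ne' fun ε hε => (hZ ε hε).ne']
  have h₁ := div_le_div_of_nonneg_right (le_of_abs_le hC₁) hp₁.le
  have h₂ := div_le_div_of_nonneg_right (neg_le_of_abs_le hC₂) hp₂.le
  rw [neg_div] at h₂
  linarith

theorem tendsto_contamLogSlope_sub_atTop {ψ : ℝ → ℝ → ℝ} {θ₁ θ₂ : ℝ} (hn : 0 < n)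
    (hconv : ∀ x, ConvexOn ℝ Set.univ (ρ x)) (hderiv : ∀ x, HasDerivAt (ρ x) (ψ x θ₁) θ₁)
    (hψ : Tendsto (fun x => ψ x θ₁) atTop atTop) (h : θ₁ < θ₂) :
    Tendsto (fun x₀ => contamLogSlope ρ X x₀ θ₁ - contamLogSlope ρ X x₀ θ₂) atTop atTop := by
  have hgap := tendsto_atTop_add_const_left _ (∑ i, ρ (X i) θ₁ - ∑ i, ρ (X i) θ₂)
    ((tendsto_sub_atTop_of_convexOn hconv hderiv hψ h).const_mul_atTop
      (Nat.cast_pos.mpr hn : (0 : ℝ) < n))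
  refine hgap.congr fun x₀ => ?_
  simp only [contamLogSlope]
  ring

end Contamination

theorem unbounded_score_not_B_robust_general {n : ℕ} (hn : 0 < n)
    (Θ : Set ℝ) (X : Fin n → ℝ)
    (ρ ψ : ℝ → ℝ → ℝ)
    (hconv : ∀ x, ConvexOn ℝ Set.univ (ρ x))
    (hderiv : ∀ x θ, HasDerivAt (ρ x) (ψ x θ) θ)
    (hψtop : ∀ θ ∈ Θ, Tendsto (fun x => ψ x θ) atTop atTop)
    (w : ℝ → ℝ)
    (hnondeg : ∃ θ₁ ∈ Θ, ∃ θ₂ ∈ Θ, θ₁ ≠ θ₂ ∧ 0 < w θ₁ ∧ 0 < w θ₂)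
    (hwell : ∀ ε ∈ Set.Icc (0 : ℝ) 1, ∀ x₀ : ℝ,
      IntegrableOn (fun t => contamNum w ρ X x₀ ε t) Θ ∧
      0 < ∫ t in Θ, contamNum w ρ X x₀ ε t)
    (PIF : ℝ → ℝ → ℝ)
    (hPIF : ∀ (x₀ : ℝ), ∀ θ ∈ Θ,
      HasDerivWithinAt (fun ε => contamPost Θ w ρ X x₀ ε θ) (PIF x₀ θ) (Set.Ici 0) 0) :
    ¬ ∃ C : ℝ, ∀ θ ∈ Θ, ∀ x₀ : ℝ, |PIF x₀ θ| ≤ C := by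
  rintro ⟨C, hC⟩
  obtain ⟨θ₁, h₁, θ₂, h₂, hne, hw₁, hw₂⟩ := hnondeg
  wlog hlt : θ₁ < θ₂ generalizing θ₁ θ₂
  · exact this θ₂ h₂ θ₁ h₁ hne.symm hw₂ hw₁ (hne.lt_or_gt.resolve_left hlt)
  obtain ⟨x₀, hx₀⟩ := ((tendsto_contamLogSlope_sub_atTop (X := X) hn hconv (hderiv · θ₁)
    (hψtop θ₁ h₁) hlt).eventually_gt_atTop
      (C / contamPost Θ w ρ X 0 0 θ₁ + C / contamPost Θ w ρ X 0 0 θ₂)).exists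
  have hbound := contamLogSlope_sub_le (hPIF x₀ θ₁ h₁) (hPIF x₀ θ₂ h₂) (hC θ₁ h₁ x₀)
    (hC θ₂ h₂ x₀) hw₁ hw₂ fun ε hε => (hwell ε hε x₀).2
  rw [contamPost_zero (x₀ := x₀) 0, contamPost_zero (x₀ := x₀) 0] at hbound
  exact hbound.not_gt hx₀

/-- **An unbounded score yields a non-robust M-posterior.**
If `θ ↦ ρ(x,θ)` is convex for every `x`, the score `ψ(x,θ) = ∂ρ/∂θ` satisfies
`ψ(x,θ) → ±∞` as `x → ±∞` for every `θ`, the prior is nondegenerate, the M-posterior is well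
defined with finite first moment, and the posterior influence function exists everywhere, then
the M-posterior is not uniformly B-robust: `sup_{θ∈Θ} sup_{x₀∈ℝ} |PIF(x₀;θ,ρ,F_n)| = ∞`. -/
theorem unbounded_score_not_B_robust {n : ℕ} (hn : 0 < n)
    (Θ : Set ℝ) (X : Fin n → ℝ)
    (ρ ψ : ℝ → ℝ → ℝ)
    (hconv : ∀ x, ConvexOn ℝ Set.univ (ρ x))
    (hderiv : ∀ x θ, HasDerivAt (ρ x) (ψ x θ) θ)
    (hψtop : ∀ θ ∈ Θ, Tendsto (fun x => ψ x θ) atTop atTop)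
    (hψbot : ∀ θ ∈ Θ, Tendsto (fun x => ψ x θ) atBot atBot)
    (w : ℝ → ℝ) (hw : ∀ θ, 0 ≤ w θ)
    (hnondeg : ∃ θ₁ ∈ Θ, ∃ θ₂ ∈ Θ, θ₁ ≠ θ₂ ∧ 0 < w θ₁ ∧ 0 < w θ₂)
    (hwell : ∀ ε ∈ Set.Icc (0 : ℝ) 1, ∀ x₀ : ℝ,
      IntegrableOn (fun t => contamNum w ρ X x₀ ε t) Θ ∧
      0 < ∫ t in Θ, contamNum w ρ X x₀ ε t)
    (hmom : IntegrableOn (fun t => |t| * (w t * Real.exp (-∑ i, ρ (X i) t))) Θ)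
    (PIF : ℝ → ℝ → ℝ)
    (hPIF : ∀ (x₀ : ℝ), ∀ θ ∈ Θ,
      HasDerivWithinAt (fun ε => contamPost Θ w ρ X x₀ ε θ) (PIF x₀ θ) (Set.Ici 0) 0) :
    ¬ ∃ C : ℝ, ∀ θ ∈ Θ, ∀ x₀ : ℝ, |PIF x₀ θ| ≤ C :=
  unbounded_score_not_B_robust_general hn Θ X ρ ψ hconv hderiv hψtop w hnondeg hwell PIF hPIF
end

section
/- Uniform two-sided bound on the corrupted empirical loss for redescending losses: Let ρ: ℝ→[0,∞) be even with ρ(0) = 0, nondecreasing on [0,∞), satisfying lim_{|x|→∞} ρ(x) = ∞ and lim_{|x|→∞} ρ(x)/|x| = 0, and whose derivative ψ = ρ' is continuous with an x_0 > 0 such that ψ is nondecreasing on (0,x_0) and nonincreasing on (x_0,∞). Fix a sample X^n ∈ ℝ^n and an integer m ≤ n. Then there exists a constant C, depending only on X^n and m (not on the corrupted values), such that for every corrupted sample X̃^n ∈ ℝ^n differing from X^n in at most m entries and every θ ∈ ℝ, defining Δ_{X̃^n}(θ) := Σ_{i=1}^n (ρ(X̃_i − θ) − ρ(X̃_i)),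 one has (n − 2m)ρ(θ) − C ≤ Δ_{X̃^n}(θ) ≤ n ρ(θ) + C. -/
open Filter

open scoped Classical in
/-- The set of samples differing from `X` in at most `m` entries (Hamming ball). -/
noncomputable def hammingBall {α : Type*} {n : ℕ} (X : Fin n → α) (m : ℕ) :
    Set (Fin n → α) :=
  {Y | (Finset.univ.filter fun i => Y i ≠ X i).card ≤ m}

/-- **Uniform two-sided bound on the corrupted empirical loss for redescending losses.**
Let `ρ` be even, vanishing at `0`, nondecreasing on `[0,∞)`, tending to `∞` but sublinearly,
with continuous derivative `ψ` that is nondecreasing on `(0,x₀)` and nonincreasing on `(x₀,∞)`.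
Then for each sample `X` and each `m ≤ n` there is a constant `C` (independent of the corrupted
values) such that for every corrupted sample `Y` differing from `X` in at most `m` entries and
every `θ`, `(n − 2m)ρ(θ) − C ≤ Σᵢ(ρ(Yᵢ−θ) − ρ(Yᵢ)) ≤ nρ(θ) + C`. -/
theorem redescending_corrupted_loss_bound
    (ρ ψ : ℝ → ℝ)
    (hnn : ∀ x, 0 ≤ ρ x) (heven : ∀ x, ρ (-x) = ρ x) (hρ0 : ρ 0 = 0)
    (hmono : MonotoneOn ρ (Set.Ici 0))
    (htop : Tendsto ρ atTop atTop)
    (hsublin : Tendsto (fun x => ρ x / x) atTop (nhds 0))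
    (hderiv : ∀ x, HasDerivAt ρ (ψ x) x) (hψcont : Continuous ψ)
    (x₀ : ℝ) (hx₀ : 0 < x₀)
    (hψup : MonotoneOn ψ (Set.Ioo 0 x₀)) (hψdown : AntitoneOn ψ (Set.Ioi x₀))
    (n m : ℕ) (hmn : m ≤ n) (X : Fin n → ℝ) :
    ∃ C : ℝ, ∀ Y ∈ hammingBall X m, ∀ θ : ℝ,
      ((n : ℝ) - 2 * m) * ρ θ - C ≤ ∑ i, (ρ (Y i - θ) - ρ (Y i)) ∧
      ∑ i, (ρ (Y i - θ) - ρ (Y i)) ≤ (n : ℝ) * ρ θ + C := by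
  classical
  -- ψ is nonnegative on [0,∞)
  have hψnn : ∀ t : ℝ, 0 ≤ t → 0 ≤ ψ t := by
    intro t ht
    have h := hderiv t
    rw [hasDerivAt_iff_tendsto_slope] at h
    have h' : Tendsto (slope ρ t) (nhdsWithin t (Set.Ioi t)) (nhds (ψ t)) :=
      h.mono_left (nhdsWithin_mono _ fun y hy => ne_of_gt hy)
    refine ge_of_tendsto h' ?_
    filter_upwards [self_mem_nhdsWithin] with y hy
    have hy' : t < y := hy
    rw [slope_def_field]
    apply div_nonneg
    · have := hmono (Set.mem_Ici.2 ht) (Set.mem_Ici.2 (ht.trans hy'.le)) hy'.le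
      linarith
    · linarith
  -- ψ is bounded by ψ x₀ on [0,∞)
  have hB : ∀ y : ℝ, x₀ < y → ψ y ≤ ψ x₀ := by
    intro y hy
    have htd : Tendsto ψ (nhdsWithin x₀ (Set.Ioi x₀)) (nhds (ψ x₀)) :=
      (hψcont.tendsto x₀).mono_left nhdsWithin_le_nhds
    refine ge_of_tendsto htd ?_
    filter_upwards [Ioo_mem_nhdsGT_of_mem (show x₀ ∈ Set.Ico x₀ y from ⟨le_refl _, hy⟩)]
      with z hz
    exact hψdown hz.1 (Set.mem_Ioi.2 hy) hz.2.le
  have hA : ∀ x : ℝ, 0 < x → x < x₀ → ψ x ≤ ψ x₀ := by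
    intro x hx hxlt
    have htd : Tendsto ψ (nhdsWithin x₀ (Set.Iio x₀)) (nhds (ψ x₀)) :=
      (hψcont.tendsto x₀).mono_left nhdsWithin_le_nhds
    refine ge_of_tendsto htd ?_
    filter_upwards [Ioo_mem_nhdsLT_of_mem (show x₀ ∈ Set.Ioc x x₀ from ⟨hxlt, le_refl _⟩)]
      with z hz
    exact hψup ⟨hx, hxlt⟩ ⟨hx.trans hz.1, hz.2⟩ hz.1.le
  have h0 : ψ 0 ≤ ψ x₀ := by
    have htd : Tendsto ψ (nhdsWithin 0 (Set.Ioi (0:ℝ))) (nhds (ψ 0)) :=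
      (hψcont.tendsto 0).mono_left nhdsWithin_le_nhds
    refine le_of_tendsto htd ?_
    filter_upwards [Ioo_mem_nhdsGT_of_mem (show (0:ℝ) ∈ Set.Ico 0 x₀ from ⟨le_refl _, hx₀⟩)]
      with z hz
    exact hA z hz.1 hz.2
  have hψle : ∀ t : ℝ, 0 ≤ t → ψ t ≤ ψ x₀ := by
    intro t ht
    rcases ht.eq_or_lt with h | h
    · rw [← h]; exact h0
    · rcases lt_trichotomy t x₀ with h2 | h2 | h2
      · exact hA t h h2
      · rw [h2]
      · exact hB t h2
  have hshift : ∀ s a : ℝ, x₀ ≤ s → 0 ≤ a → ψ (s + a) ≤ ψ s := by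
    intro s a hs ha
    rcases ha.eq_or_lt with h | h
    · rw [← h, add_zero]
    · rcases hs.eq_or_lt with h2 | h2
      · rw [← h2]; exact hB _ (by linarith)
      · exact hψdown (Set.mem_Ioi.2 h2) (Set.mem_Ioi.2 (by linarith)) (by linarith)
  have hψint : ∀ a b : ℝ, IntervalIntegrable ψ MeasureTheory.volume a b :=
    fun a b => hψcont.intervalIntegrable a b
  have hFTC : ∀ a b : ℝ, (∫ t in a..b, ψ t) = ρ b - ρ a := fun a b =>
    intervalIntegral.integral_eq_sub_of_hasDerivAt (fun x _ => hderiv x) (hψint a b)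
  have hψx₀ : 0 ≤ ψ x₀ := hψnn x₀ hx₀.le
  set K := x₀ * ψ x₀ with hK
  have hK0 : 0 ≤ K := mul_nonneg hx₀.le hψx₀
  have hpiece : ∀ a c : ℝ, 0 ≤ a → 0 ≤ c → (∫ t in a..(a+c), ψ t) ≤ c * ψ x₀ := by
    intro a c ha hc
    have h1 : (∫ t in a..(a+c), ψ t) ≤ ∫ _t in a..(a+c), ψ x₀ := by
      apply intervalIntegral.integral_mono_on (by linarith) (hψint _ _) intervalIntegrable_const
      intro x hx
      exact hψle x (le_trans ha hx.1)
    simpa using h1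
  have hsub0 : ∀ a b : ℝ, 0 ≤ a → 0 ≤ b → ρ (a + b) ≤ ρ a + ρ b + K := by
    intro a b ha hb
    have hmain : ρ (a+b) - ρ a = ∫ t in a..(a+b), ψ t := (hFTC a (a+b)).symm
    by_cases hbx : b ≤ x₀
    · have h1 := hpiece a b ha hb
      have h2 : b * ψ x₀ ≤ K := by
        rw [hK]; exact mul_le_mul_of_nonneg_right hbx hψx₀
      have := hnn b
      linarith
    · push_neg at hbx
      have hsplit : ((∫ t in a..(a+x₀), ψ t) + ∫ t in (a+x₀)..(a+b), ψ t)
          = ∫ t in a..(a+b), ψ t :=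
        intervalIntegral.integral_add_adjacent_intervals (hψint _ _) (hψint _ _)
      have h1 : (∫ t in a..(a+x₀), ψ t) ≤ K := by
        simpa [hK] using hpiece a x₀ ha hx₀.le
      have h2 : (∫ t in (a+x₀)..(a+b), ψ t) = ∫ s in x₀..b, ψ (s + a) := by
        rw [intervalIntegral.integral_comp_add_right]
        rw [add_comm a x₀, add_comm a b]
      have h3 : (∫ s in x₀..b, ψ (s + a)) ≤ ∫ s in x₀..b, ψ s := by
        apply intervalIntegral.integral_mono_on hbx.le
          ((hψcont.comp (continuous_id.add continuous_const)).intervalIntegrable _ _)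
          (hψint _ _)
        intro s hs
        exact hshift s a hs.1 ha
      have h4 : (∫ s in x₀..b, ψ s) = ρ b - ρ x₀ := hFTC x₀ b
      have h5 := hnn x₀
      linarith
  have habs : ∀ x : ℝ, ρ |x| = ρ x := by
    intro x
    rcases abs_cases x with ⟨h, _⟩ | ⟨h, _⟩
    · rw [h]
    · rw [h, heven]
  have hsubK : ∀ u v : ℝ, ρ (u + v) ≤ ρ u + ρ v + K := by
    intro u v
    have h1 : ρ (u + v) ≤ ρ (|u| + |v|) := by
      rw [← habs (u+v)]
      exact hmono (Set.mem_Ici.2 (abs_nonneg _))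
        (Set.mem_Ici.2 (by positivity)) (abs_add_le u v)
    have h2 := hsub0 |u| |v| (abs_nonneg u) (abs_nonneg v)
    rw [habs, habs] at h2
    linarith
  refine ⟨(n : ℝ) * K + 2 * ∑ i, ρ (X i), ?_⟩
  intro Y hY θ
  have hρθ : 0 ≤ ρ θ := hnn θ
  have hterm_up : ∀ i, ρ (Y i - θ) - ρ (Y i) ≤ ρ θ + K := by
    intro i
    have h := hsubK (Y i) (-θ)
    rw [heven] at h
    have e : Y i + -θ = Y i - θ := by ring
    rw [e] at h
    linarith
  have hterm_lo1 : ∀ i, ρ θ - 2 * ρ (Y i) - K ≤ ρ (Y i - θ) - ρ (Y i) := by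
    intro i
    have h := hsubK (θ - Y i) (Y i)
    have e : θ - Y i + Y i = θ := by ring
    rw [e] at h
    have e2 : ρ (θ - Y i) = ρ (Y i - θ) := by
      rw [← heven (θ - Y i)]; congr 1; ring
    rw [e2] at h
    linarith
  have hterm_lo2 : ∀ i, -(ρ θ) - K ≤ ρ (Y i - θ) - ρ (Y i) := by
    intro i
    have h := hsubK (Y i - θ) θ
    rw [sub_add_cancel] at h
    linarith
  set S := Finset.univ.filter (fun i => Y i ≠ X i) with hSdef
  have hScard : S.card ≤ m := by
    have := hY
    simpa [hammingBall, hSdef] using this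
  have hSn : S.card ≤ n := by
    calc S.card ≤ Finset.univ.card := Finset.card_le_card (Finset.subset_univ _)
      _ = n := by simp
  have hcompl : ∀ i ∈ Sᶜ, Y i = X i := by
    intro i hi
    have h := Finset.mem_compl.1 hi
    simp only [hSdef, Finset.mem_filter, Finset.mem_univ, true_and, not_not] at h
    exact h
  have hCcard : ((Sᶜ : Finset (Fin n)).card : ℝ) = (n : ℝ) - S.card := by
    rw [Finset.card_compl, Fintype.card_fin, Nat.cast_sub hSn]
  have hU : (0:ℝ) ≤ ∑ i, ρ (X i) := Finset.sum_nonneg fun i _ => hnn _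
  have hT : ∑ i ∈ Sᶜ, ρ (X i) ≤ ∑ i, ρ (X i) :=
    Finset.sum_le_sum_of_subset_of_nonneg (Finset.subset_univ _) (fun i _ _ => hnn _)
  have hsplit := Finset.sum_add_sum_compl S (fun i => ρ (Y i - θ) - ρ (Y i))
  constructor
  · -- lower bound
    have hlow1 : (S.card : ℝ) * (-(ρ θ) - K) ≤ ∑ i ∈ S, (ρ (Y i - θ) - ρ (Y i)) := by
      calc (S.card : ℝ) * (-(ρ θ) - K) = ∑ _i ∈ S, (-(ρ θ) - K) := by
            rw [Finset.sum_const, nsmul_eq_mul]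
        _ ≤ _ := Finset.sum_le_sum fun i _ => hterm_lo2 i
    have hlow2 : ((Sᶜ : Finset (Fin n)).card : ℝ) * (ρ θ - K) - 2 * ∑ i ∈ Sᶜ, ρ (X i)
        ≤ ∑ i ∈ Sᶜ, (ρ (Y i - θ) - ρ (Y i)) := by
      have step : ∀ i ∈ Sᶜ, ρ θ - 2 * ρ (X i) - K ≤ ρ (Y i - θ) - ρ (Y i) := by
        intro i hi
        rw [hcompl i hi]
        have h := hterm_lo1 i
        rw [hcompl i hi] at h
        exact h
      calc ((Sᶜ : Finset (Fin n)).card : ℝ) * (ρ θ - K) - 2 * ∑ i ∈ Sᶜ, ρ (X i)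
          = ∑ i ∈ Sᶜ, (ρ θ - 2 * ρ (X i) - K) := by
            rw [Finset.sum_sub_distrib, Finset.sum_sub_distrib, Finset.sum_const,
              Finset.sum_const, nsmul_eq_mul, nsmul_eq_mul, ← Finset.mul_sum]
            ring
        _ ≤ _ := Finset.sum_le_sum step
    have hsm : (S.card : ℝ) ≤ m := by exact_mod_cast hScard
    have hkey : ((n : ℝ) - 2 * m) * ρ θ ≤ ((n : ℝ) - 2 * S.card) * ρ θ :=
      mul_le_mul_of_nonneg_right (by linarith) hρθ
    rw [← hsplit]
    nlinarith [hlow1, hlow2, hCcard, hT, hkey]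
  · -- upper bound
    calc ∑ i, (ρ (Y i - θ) - ρ (Y i)) ≤ ∑ _i : Fin n, (ρ θ + K) :=
          Finset.sum_le_sum fun i _ => hterm_up i
      _ = (n : ℝ) * (ρ θ + K) := by
          rw [Finset.sum_const, Finset.card_univ, Fintype.card_fin, nsmul_eq_mul]
      _ ≤ (n : ℝ) * ρ θ + ((n : ℝ) * K + 2 * ∑ i, ρ (X i)) := by
          nlinarith [hU]
end

section
/- Breakdown point of redescending M-posteriors: Let ρ: ℝ→[0,∞) be even with ρ(0) = 0, nondecreasing on [0,∞), satisfying lim_{|x|→∞} ρ(x) = ∞ and lim_{|x|→∞} ρ(x)/|x| = 0, with continuous derivative ψ = ρ' for which there exists x_0 > 0 with ψ nondecreasing on (0,x_0) and nonincreasing on (x_0,∞). Let π be a (possibly improper) prior density such that ∫_ℝ θ² π(θ) exp(−ρ(θ)) dθ < ∞ and the location M-posterior π_n^ρ(·|F̃_n) is well defined for every sample. Then for every m with 2m < n, sup_{X̃∈B_H(X^n,m)} W_2(π_n^ρ(·|F̃_n), π_n^ρ(·|F_n)) < ∞; hence ε*_{W2}(π_n^ρ,X^n) ≥ 1/2. If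 moreover π ≡ 1, then ε*_{W2}(π_n^ρ,X^n) = 1/2. -/
open MeasureTheory ENNReal Filter

open MeasureTheory ENNReal

/-- Density of the location M-posterior on `ℝ` with loss `ρ`, prior density `w`, sample `Y`. -/
noncomputable def locPostDensity (ρ w : ℝ → ℝ) {n : ℕ} (Y : Fin n → ℝ) (θ : ℝ) : ℝ :=
  w θ * Real.exp (-∑ j, ρ (Y j - θ)) / ∫ t : ℝ, w t * Real.exp (-∑ j, ρ (Y j - t))

/-- The location M-posterior as a measure on `ℝ`. -/
noncomputable def locPostMeasure (ρ w : ℝ → ℝ) {n : ℕ} (Y : Fin n → ℝ) : Measure ℝ :=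
  MeasureTheory.volume.withDensity fun θ => ENNReal.ofReal (locPostDensity ρ w Y θ)

/-- The 2-Wasserstein distance between measures on `ℝ` (square root of the infimum over
couplings of `∫(x−y)²dγ`). -/
noncomputable def W2 (P Q : Measure ℝ) : ℝ≥0∞ :=
  (⨅ (γ : Measure (ℝ × ℝ)) (_ : γ.map Prod.fst = P ∧ γ.map Prod.snd = Q),
    ∫⁻ z, ENNReal.ofReal ((z.1 - z.2) ^ 2) ∂γ) ^ (1 / 2 : ℝ)

/-- The worst-case 2-Wasserstein deviation of the M-posterior over samples corrupted in at
most `m` entries. -/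
noncomputable def supW2 (ρ w : ℝ → ℝ) {n : ℕ} (X : Fin n → ℝ) (m : ℕ) : ℝ≥0∞ :=
  ⨆ Y ∈ hammingBall X m, W2 (locPostMeasure ρ w Y) (locPostMeasure ρ w X)

/-- The posterior breakdown point: the least fraction `m/n` of corrupted points driving the
M-posterior arbitrarily far in 2-Wasserstein distance. -/
noncomputable def breakdownPoint (ρ w : ℝ → ℝ) {n : ℕ} (X : Fin n → ℝ) : ℝ :=
  sInf {r : ℝ | ∃ m : ℕ, m ≤ n ∧ r = (m : ℝ) / n ∧ supW2 ρ w X m = ⊤}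
/-!
Beyond `x₀` the derivative `ψ` decreases, so the increments of `ρ` over a fixed step shrink and
`ρ (u + v) ≤ ρ u + ρ v + C`. If fewer than half of the points are corrupted, the potential
`∑ⱼ ρ (Yⱼ - θ)` of the corrupted sample is then bounded below by `ρ θ` and above by the potential
of `X`, both up to the same shift `∑_{corrupted j} ρ (Yⱼ - Xⱼ)`, which cancels between numerator
and normalising constant of the posterior. So the posterior second moments are bounded uniformly
in `Y`, and so is `W₂` (use the product coupling).

If `n ≤ 2m` and the prior is flat, keep `n - m` points of `X`, mirror them about a far point `c`
and put the remaining corrupted points at `c`. The posterior is symmetric about `c`, so it puts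
mass `1/2` on `[c, ∞)`, while the posterior of `X` puts at most `1/4` on `(t, ∞)` for a fixed `t`;
every coupling then moves mass `1/4` over distance `c - t`.
-/

open Set

lemma antitoneOn_sub_comp_add {ρ ψ : ℝ → ℝ} {x₀ a : ℝ} (hderiv : ∀ x, HasDerivAt ρ (ψ x) x)
    (hψ : AntitoneOn ψ (Ioi x₀)) (ha : 0 ≤ a) :
    AntitoneOn (fun x => ρ (x + a) - ρ x) (Ici x₀) := by
  have hcont : Continuous ρ := continuous_iff_continuousAt.2 fun x => (hderiv x).continuousAt
  refine antitoneOn_of_hasDerivWithinAt_nonpos (convex_Ici x₀)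
    ((hcont.comp (continuous_add_const a)).sub hcont).continuousOn
    (fun x _ => (((hderiv (x + a)).comp_add_const x a).sub (hderiv x)).hasDerivWithinAt) ?_
  rw [interior_Ici]
  intro x hx
  have hxa : x ≤ x + a := le_add_of_nonneg_right ha
  exact sub_nonpos.2 (hψ hx (lt_of_lt_of_le hx hxa) hxa)

lemma exists_add_le_add_add_const {ρ ψ : ℝ → ℝ} {x₀ : ℝ} (hnn : ∀ x, 0 ≤ ρ x)
    (heven : ∀ x, ρ (-x) = ρ x) (hmono : MonotoneOn ρ (Ici 0))
    (hderiv : ∀ x, HasDerivAt ρ (ψ x) x) (hψ : AntitoneOn ψ (Ioi x₀)) :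
    ∃ C, 0 ≤ C ∧ ∀ u v, ρ (u + v) ≤ ρ u + ρ v + C := by
  set x₁ := max x₀ 0
  have hx₁ : 0 ≤ x₁ := le_max_right _ _
  have hinc : ∀ a, 0 ≤ a → ∀ b, x₁ ≤ b → ρ (b + a) - ρ b ≤ ρ (x₁ + a) - ρ x₁ :=
    fun a ha b hb => antitoneOn_sub_comp_add hderiv hψ ha
      (le_max_left x₀ 0) (le_trans (le_max_left x₀ 0) hb) hb
  have hmono' : ∀ a b, 0 ≤ a → a ≤ b → ρ a ≤ ρ b := fun a b ha hab =>
    hmono ha (ha.trans hab) hab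
  have hshift : ∀ a, 0 ≤ a → ρ (x₁ + a) ≤ ρ a + ρ (x₁ + x₁) := by
    intro a ha
    rcases le_total a x₁ with h | h
    · linarith [hmono' (x₁ + a) (x₁ + x₁) (by linarith) (by linarith), hnn a]
    · linarith [add_comm x₁ a ▸ hinc x₁ hx₁ a h, hnn x₁]
  have hpos : ∀ a b, 0 ≤ a → 0 ≤ b → ρ (a + b) ≤ ρ a + ρ b + ρ (x₁ + x₁) := by
    suffices key : ∀ a b, 0 ≤ a → x₁ ≤ b → ρ (a + b) ≤ ρ a + ρ b + ρ (x₁ + x₁) by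
      intro a b ha hb
      rcases le_total x₁ b with h | h
      · exact key a b ha h
      rcases le_total x₁ a with h' | h'
      · linarith [add_comm a b ▸ key b a hb h']
      · linarith [hmono' (a + b) (x₁ + x₁) (by linarith) (by linarith), hnn a, hnn b]
    intro a b ha hb
    linarith [add_comm a b ▸ hinc a ha b hb, hshift a ha, hnn x₁]
  have habs : ∀ x, ρ |x| = ρ x := fun x => by
    rcases abs_choice x with h | h <;> simp [h, heven]
  refine ⟨ρ (x₁ + x₁), hnn _, fun u v => ?_⟩
  calc ρ (u + v) = ρ |u + v| := (habs _).symm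
    _ ≤ ρ (|u| + |v|) := hmono' _ _ (abs_nonneg _) (abs_add_le u v)
    _ ≤ ρ u + ρ v + ρ (x₁ + x₁) := by
      simpa only [habs] using hpos |u| |v| (abs_nonneg u) (abs_nonneg v)

lemma mem_hammingBall_iff {α : Type*} {n m : ℕ} {X Y : Fin n → α} :
    Y ∈ hammingBall X m ↔ ∃ S : Finset (Fin n), S.card ≤ m ∧ ∀ j ∉ S, Y j = X j := by
  classical
  constructor
  · intro hY
    refine ⟨_, hY, fun j hj => ?_⟩
    simpa using hj
  · rintro ⟨S, hS, hYX⟩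
    refine le_trans (Finset.card_le_card fun j hj => ?_) hS
    by_contra hjS
    exact (Finset.mem_filter.1 hj).2 (hYX j hjS)

section Potential

variable {ρ : ℝ → ℝ} {C : ℝ} {n : ℕ} {X Y : Fin n → ℝ} {S : Finset (Fin n)}

lemma sum_sub_le_sum_sub_add (hsub : ∀ u v, ρ (u + v) ≤ ρ u + ρ v + C) (hC : 0 ≤ C)
    (hYX : ∀ j ∉ S, Y j = X j) (θ : ℝ) :
    ∑ j, ρ (Y j - θ) ≤ ∑ j, ρ (X j - θ) + ∑ j ∈ S, ρ (Y j - X j) + n * C := by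
  have hbad : ∑ j ∈ S, ρ (Y j - θ) ≤ ∑ j ∈ S, (ρ (Y j - X j) + ρ (X j - θ) + C) :=
    Finset.sum_le_sum fun j _ => by simpa using hsub (Y j - X j) (X j - θ)
  have hgood : ∑ j ∈ Sᶜ, ρ (Y j - θ) = ∑ j ∈ Sᶜ, ρ (X j - θ) :=
    Finset.sum_congr rfl fun j hj => by rw [hYX j (Finset.mem_compl.1 hj)]
  have hcard : (S.card : ℝ) * C ≤ n * C := mul_le_mul_of_nonneg_right
    (by exact_mod_cast (Finset.card_le_univ S).trans_eq (Fintype.card_fin n)) hC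
  rw [← Finset.sum_add_sum_compl S (fun j => ρ (Y j - θ)),
    ← Finset.sum_add_sum_compl S (fun j => ρ (X j - θ))]
  simp only [Finset.sum_add_distrib, Finset.sum_const, nsmul_eq_mul] at hbad
  linarith

lemma le_sum_sub (hsub : ∀ u v, ρ (u + v) ≤ ρ u + ρ v + C) (heven : ∀ x, ρ (-x) = ρ x)
    (hnn : ∀ x, 0 ≤ ρ x) (hC : 0 ≤ C) (hYX : ∀ j ∉ S, Y j = X j) (hS : 2 * S.card < n)
    (θ : ℝ) :
    ρ θ + ∑ j ∈ S, ρ (Y j - X j) - (∑ j, ρ (X j) + 2 * n * C) ≤ ∑ j, ρ (Y j - θ) := by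
  have hsub' : ∀ u v, ρ (u - v) ≤ ρ u + ρ v + C := fun u v => by
    simpa [heven, sub_eq_add_neg] using hsub u (-v)
  have hbad : ∑ j ∈ S, (ρ (Y j - X j) - ρ θ - ρ (X j) - 2 * C) ≤ ∑ j ∈ S, ρ (Y j - θ) :=
    Finset.sum_le_sum fun j _ => by
      have h := hsub (Y j - θ) (θ - X j)
      simp only [sub_add_sub_cancel] at h
      linarith [hsub' θ (X j)]
  have hgood : ∑ j ∈ Sᶜ, (ρ θ - ρ (X j) - C) ≤ ∑ j ∈ Sᶜ, ρ (Y j - θ) :=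
    Finset.sum_le_sum fun j hj => by
      have h := hsub' (X j - θ) (X j)
      rw [sub_sub_cancel_left, heven] at h
      rw [hYX j (Finset.mem_compl.1 hj)]
      linarith
  have hcard : (S.card : ℝ) + Sᶜ.card = n := by
    exact_mod_cast (Finset.card_add_card_compl S).trans (Fintype.card_fin n)
  have hS' : 2 * (S.card : ℝ) + 1 ≤ n := by exact_mod_cast hS
  have hmajority : ρ θ ≤ (Sᶜ.card - S.card) * ρ θ :=
    le_mul_of_one_le_left (hnn θ) (by linarith)
  have hconst : (2 * S.card + Sᶜ.card) * C ≤ 2 * n * C :=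
    mul_le_mul_of_nonneg_right (by linarith [(Sᶜ.card.cast_nonneg : (0 : ℝ) ≤ _)]) hC
  rw [← Finset.sum_add_sum_compl S (fun j => ρ (Y j - θ)),
    ← Finset.sum_add_sum_compl S (fun j => ρ (X j))]
  simp only [Finset.sum_sub_distrib, Finset.sum_const, nsmul_eq_mul] at hbad hgood
  linarith

end Potential

section Posterior

variable {ρ w : ℝ → ℝ} {n : ℕ}

lemma isProbabilityMeasure_locPostMeasure {Y : Fin n → ℝ} (hw : ∀ θ, 0 ≤ w θ)
    (hint : Integrable fun t => w t * Real.exp (-∑ j, ρ (Y j - t)))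
    (hpos : 0 < ∫ t, w t * Real.exp (-∑ j, ρ (Y j - t))) :
    IsProbabilityMeasure (locPostMeasure ρ w Y) := by
  constructor
  unfold locPostMeasure locPostDensity
  rw [withDensity_apply _ MeasurableSet.univ, setLIntegral_univ,
    ← ofReal_integral_eq_lintegral_ofReal (hint.div_const _)
      (Eventually.of_forall fun t => div_nonneg (mul_nonneg (hw t) (Real.exp_nonneg _)) hpos.le),
    integral_div, div_self hpos.ne', ENNReal.ofReal_one]

lemma lintegral_sq_locPostMeasure_le {n' : ℕ} {X : Fin n' → ℝ} {Y : Fin n → ℝ} {a b : ℝ}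
    (hw : ∀ θ, 0 ≤ w θ) (hmom : Integrable fun θ => θ ^ 2 * (w θ * Real.exp (-ρ θ)))
    (hintX : Integrable fun t => w t * Real.exp (-∑ j, ρ (X j - t)))
    (hposX : 0 < ∫ t, w t * Real.exp (-∑ j, ρ (X j - t)))
    (hintY : Integrable fun t => w t * Real.exp (-∑ j, ρ (Y j - t)))
    (hlow : ∀ θ, ρ θ + a ≤ ∑ j, ρ (Y j - θ))
    (hup : ∀ θ, ∑ j, ρ (Y j - θ) ≤ ∑ j, ρ (X j - θ) + b) :
    ∫⁻ θ, ENNReal.ofReal (θ ^ 2) ∂locPostMeasure ρ w Y ≤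
      ENNReal.ofReal (Real.exp (b - a) / (∫ t, w t * Real.exp (-∑ j, ρ (X j - t))) *
        ∫ θ, θ ^ 2 * (w θ * Real.exp (-ρ θ))) := by
  set ZX := ∫ t, w t * Real.exp (-∑ j, ρ (X j - t))
  set ZY := ∫ t, w t * Real.exp (-∑ j, ρ (Y j - t))
  have hZ : Real.exp (-b) * ZX ≤ ZY := by
    rw [← integral_const_mul]
    refine integral_mono (hintX.const_mul _) hintY fun t => ?_
    calc Real.exp (-b) * (w t * Real.exp (-∑ j, ρ (X j - t)))
        = w t * Real.exp (-(∑ j, ρ (X j - t) + b)) := by rw [neg_add, Real.exp_add]; ring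
      _ ≤ w t * Real.exp (-∑ j, ρ (Y j - t)) := by gcongr; exacts [hw t, hup t]
  have hdens : ∀ θ, locPostDensity ρ w Y θ ≤ Real.exp (b - a) / ZX * (w θ * Real.exp (-ρ θ)) := by
    intro θ
    calc locPostDensity ρ w Y θ ≤ w θ * Real.exp (-(ρ θ + a)) / (Real.exp (-b) * ZX) := by
          refine div_le_div₀ (mul_nonneg (hw θ) (Real.exp_nonneg _)) ?_
            (mul_pos (Real.exp_pos _) hposX) hZ
          gcongr
          exacts [hw θ, hlow θ]
      _ = Real.exp (b - a) / ZX * (w θ * Real.exp (-ρ θ)) := by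
          rw [neg_add, Real.exp_add, sub_eq_add_neg, Real.exp_add, Real.exp_neg b]
          field_simp
  have hdens_nonneg : ∀ θ, 0 ≤ locPostDensity ρ w Y θ := fun θ =>
    div_nonneg (mul_nonneg (hw θ) (Real.exp_nonneg _))
      ((mul_nonneg (Real.exp_nonneg _) hposX.le).trans hZ)
  have hmeas : AEMeasurable fun θ => ENNReal.ofReal (locPostDensity ρ w Y θ) :=
    (hintY.div_const ZY).aestronglyMeasurable.aemeasurable.ennreal_ofReal
  rw [locPostMeasure, lintegral_withDensity_eq_lintegral_mul₀ hmeas (by fun_prop),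
    ← integral_const_mul, ofReal_integral_eq_lintegral_ofReal (hmom.const_mul _)
      (Eventually.of_forall fun θ => by have := hw θ; positivity)]
  refine lintegral_mono fun θ => ?_
  rw [Pi.mul_apply, ← ENNReal.ofReal_mul (hdens_nonneg θ)]
  refine ENNReal.ofReal_le_ofReal ?_
  calc locPostDensity ρ w Y θ * θ ^ 2
      ≤ Real.exp (b - a) / ZX * (w θ * Real.exp (-ρ θ)) * θ ^ 2 := by gcongr; exact hdens θ
    _ = _ := by ring

end Posterior

section Wasserstein

variable {P Q : Measure ℝ}

lemma W2_le_of_lintegral_sq_le [IsProbabilityMeasure P] [IsProbabilityMeasure Q] {B : ℝ≥0∞}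
    (hP : ∫⁻ x, ENNReal.ofReal (x ^ 2) ∂P ≤ B) (hQ : ∫⁻ x, ENNReal.ofReal (x ^ 2) ∂Q ≤ B) :
    W2 P Q ≤ (4 * B) ^ (1 / 2 : ℝ) := by
  have hmarg : (P.prod Q).map Prod.fst = P ∧ (P.prod Q).map Prod.snd = Q := by simp
  have hsq : Measurable fun x : ℝ => ENNReal.ofReal (x ^ 2) := by fun_prop
  have hpt : ∀ z : ℝ × ℝ, ENNReal.ofReal ((z.1 - z.2) ^ 2) ≤
      2 * ENNReal.ofReal (z.1 ^ 2) + 2 * ENNReal.ofReal (z.2 ^ 2) := fun z => by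
    rw [← ENNReal.ofReal_ofNat 2, ← ENNReal.ofReal_mul zero_le_two,
      ← ENNReal.ofReal_mul zero_le_two, ← ENNReal.ofReal_add (by positivity) (by positivity)]
    exact ENNReal.ofReal_le_ofReal (by nlinarith [sq_nonneg (z.1 + z.2)])
  refine ENNReal.rpow_le_rpow (iInf₂_le_of_le (P.prod Q) hmarg ?_) (by norm_num)
  calc ∫⁻ z, ENNReal.ofReal ((z.1 - z.2) ^ 2) ∂P.prod Q
      ≤ ∫⁻ z, (2 * ENNReal.ofReal (z.1 ^ 2) + 2 * ENNReal.ofReal (z.2 ^ 2)) ∂P.prod Q :=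
        lintegral_mono hpt
    _ = 2 * ∫⁻ x, ENNReal.ofReal (x ^ 2) ∂P + 2 * ∫⁻ x, ENNReal.ofReal (x ^ 2) ∂Q := by
        rw [lintegral_add_left (by fun_prop), lintegral_const_mul _ (by fun_prop),
          lintegral_const_mul _ (by fun_prop), ← lintegral_map hsq measurable_fst,
          ← lintegral_map hsq measurable_snd, hmarg.1, hmarg.2]
    _ ≤ 2 * B + 2 * B := by gcongr
    _ = 4 * B := by ring

lemma mul_le_lintegral_sq_sub {γ : Measure (ℝ × ℝ)}
    (hγ : γ.map Prod.fst = P ∧ γ.map Prod.snd = Q) {c t : ℝ} (htc : t ≤ c) :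
    ENNReal.ofReal ((c - t) ^ 2) * (P (Ici c) - Q (Ioi t)) ≤
      ∫⁻ z, ENNReal.ofReal ((z.1 - z.2) ^ 2) ∂γ := by
  set S := Ici c ×ˢ Iic t
  have hmass : P (Ici c) - Q (Ioi t) ≤ γ S := by
    rw [tsub_le_iff_right, ← hγ.1, ← hγ.2, Measure.map_apply measurable_fst measurableSet_Ici,
      Measure.map_apply measurable_snd measurableSet_Ioi]
    refine (measure_mono fun z hz => ?_).trans (measure_union_le _ _)
    by_cases h : z.2 ≤ t
    · exact Or.inl ⟨hz, h⟩
    · exact Or.inr (lt_of_not_ge h)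
  calc ENNReal.ofReal ((c - t) ^ 2) * (P (Ici c) - Q (Ioi t))
      ≤ ∫⁻ z, S.indicator (fun _ => ENNReal.ofReal ((c - t) ^ 2)) z ∂γ := by
        rw [lintegral_indicator_const (measurableSet_Ici.prod measurableSet_Iic)]
        gcongr
    _ ≤ ∫⁻ z, ENNReal.ofReal ((z.1 - z.2) ^ 2) ∂γ := by
        refine lintegral_mono fun z => ?_
        by_cases hz : z ∈ S
        · rw [indicator_of_mem hz]
          exact ENNReal.ofReal_le_ofReal
            (pow_le_pow_left₀ (by linarith) (by linarith [hz.1.out, hz.2.out]) 2)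
        · rw [indicator_of_notMem hz]
          exact zero_le

lemma ofReal_half_sub_le_W2 {c t : ℝ} (htc : t ≤ c) (hP : 2⁻¹ ≤ P (Ici c))
    (hQ : Q (Ioi t) ≤ 4⁻¹) : ENNReal.ofReal ((c - t) / 2) ≤ W2 P Q := by
  have hquarter : (2⁻¹ : ℝ≥0∞) - 4⁻¹ = 4⁻¹ := by
    refine ENNReal.sub_eq_of_eq_add (by simp) ?_
    rw [← two_mul, show (4 : ℝ≥0∞) = 2 * 2 by norm_num, ENNReal.mul_inv (by simp) (by simp),
      ← mul_assoc, ENNReal.mul_inv_cancel (by simp) (by simp), one_mul]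
  have hcost : ENNReal.ofReal ((c - t) ^ 2) * 4⁻¹ ≤
      ⨅ (γ : Measure (ℝ × ℝ)) (_ : γ.map Prod.fst = P ∧ γ.map Prod.snd = Q),
        ∫⁻ z, ENNReal.ofReal ((z.1 - z.2) ^ 2) ∂γ :=
    le_iInf₂ fun _ hγ => le_trans (by rw [← hquarter]; gcongr) (mul_le_lintegral_sq_sub hγ htc)
  refine le_trans (le_of_eq ?_) (ENNReal.rpow_le_rpow hcost (by norm_num : (0 : ℝ) ≤ 1 / 2))
  rw [← ENNReal.ofReal_ofNat 4, ← ENNReal.ofReal_inv_of_pos (by norm_num),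
    ← ENNReal.ofReal_mul (sq_nonneg _), ENNReal.ofReal_rpow_of_nonneg (by positivity)
      (by norm_num), ← Real.sqrt_eq_rpow, show (c - t) ^ 2 * 4⁻¹ = ((c - t) / 2) ^ 2 by ring,
    Real.sqrt_sq (by linarith)]

end Wasserstein

lemma exists_measure_Ioi_le (μ : Measure ℝ) [IsProbabilityMeasure μ] {ε : ℝ≥0∞} (hε : 0 < ε) :
    ∃ t, μ (Ioi t) ≤ ε := by
  have h : Tendsto (fun t => μ (Ioi t)) atTop (nhds 0) := by
    have := ENNReal.Tendsto.sub tendsto_const_nhds (tendsto_measure_Iic_atTop μ)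
      (Or.inl one_ne_top)
    simpa [← compl_Iic, prob_compl_eq_one_sub measurableSet_Iic] using this
  exact (h.eventually (ge_mem_nhds hε)).exists

lemma withDensity_Iic_eq_Ici {f : ℝ → ℝ≥0∞} {c : ℝ} (hf : ∀ x, f (2 * c - x) = f x) :
    volume.withDensity f (Iic c) = volume.withDensity f (Ici c) := by
  have hpre : (fun x => 2 * c - x) ⁻¹' Ici c = Iic c := by
    ext x
    simp only [mem_preimage, mem_Ici, mem_Iic]
    constructor <;> intro h <;> linarith
  have hreflect := (Measure.measurePreserving_sub_left volume (2 * c)).setLIntegral_comp_preimage_emb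
    (MeasurableEquiv.subLeft (2 * c)).measurableEmbedding f (Ici c)
  rw [hpre] at hreflect
  simp only [hf] at hreflect
  rw [withDensity_apply _ measurableSet_Iic, withDensity_apply _ measurableSet_Ici, hreflect]

lemma inv_two_le_measure_Ici {μ : Measure ℝ} [IsProbabilityMeasure μ] {c : ℝ}
    (h : μ (Iic c) = μ (Ici c)) : 2⁻¹ ≤ μ (Ici c) := by
  have h1 : 1 ≤ 2 * μ (Ici c) := by
    rw [two_mul, ← measure_univ (μ := μ), ← Iic_union_Ici (a := c)]
    nth_rewrite 1 [← h]
    exact measure_union_le _ _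
  rw [ENNReal.inv_le_iff_le_mul] <;> simp [h1]

section Reflection

variable {n : ℕ}

noncomputable def reflectSample (X : Fin n → ℝ) (k : ℕ) (c : ℝ) : Fin n → ℝ :=
  fun j => if (j : ℕ) < k then X j else if (j.rev : ℕ) < k then 2 * c - X j.rev else c

lemma reflectSample_rev (X : Fin n → ℝ) {k : ℕ} (hk : 2 * k ≤ n) (c : ℝ) (j : Fin n) :
    reflectSample X k c j.rev = 2 * c - reflectSample X k c j := by
  have := Fin.val_rev j
  have := j.isLt
  unfold reflectSample
  rw [Fin.rev_rev]
  split_ifs <;> first | omega | ring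

lemma reflectSample_mem_hammingBall (X : Fin n → ℝ) {m : ℕ} (c : ℝ) :
    reflectSample X (n - m) c ∈ hammingBall X m := by
  classical
  refine mem_hammingBall_iff.2 ⟨(Finset.univ.filter fun j : Fin n => (j : ℕ) < n - m)ᶜ, ?_,
    fun j hj => ?_⟩
  · rw [Finset.card_compl, Fin.card_filter_val_lt, Fintype.card_fin]
    omega
  · simp only [Finset.mem_compl, Finset.mem_filter, Finset.mem_univ, true_and, not_not] at hj
    simp [reflectSample, hj]

lemma sum_sub_reflect {ρ : ℝ → ℝ} (heven : ∀ x, ρ (-x) = ρ x) {Y : Fin n → ℝ} {c : ℝ}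
    (σ : Equiv.Perm (Fin n)) (hσ : ∀ j, Y (σ j) = 2 * c - Y j) (θ : ℝ) :
    ∑ j, ρ (Y j - (2 * c - θ)) = ∑ j, ρ (Y j - θ) := by
  rw [← Equiv.sum_comp σ (fun j => ρ (Y j - θ))]
  refine Finset.sum_congr rfl fun j _ => ?_
  rw [hσ, ← heven]
  ring_nf

lemma locPostDensity_reflect {ρ w : ℝ → ℝ} (heven : ∀ x, ρ (-x) = ρ x) {Y : Fin n → ℝ} {c : ℝ}
    (hw : ∀ θ, w (2 * c - θ) = w θ) (σ : Equiv.Perm (Fin n)) (hσ : ∀ j, Y (σ j) = 2 * c - Y j)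
    (θ : ℝ) : locPostDensity ρ w Y (2 * c - θ) = locPostDensity ρ w Y θ := by
  rw [locPostDensity, locPostDensity, hw, sum_sub_reflect heven σ hσ]

end Reflection

section Breakdown

variable {ρ w : ℝ → ℝ} {n m : ℕ} {X : Fin n → ℝ}

lemma exists_lintegral_sq_locPostMeasure_le {C : ℝ} (hnn : ∀ x, 0 ≤ ρ x)
    (heven : ∀ x, ρ (-x) = ρ x) (hC : 0 ≤ C) (hsub : ∀ u v, ρ (u + v) ≤ ρ u + ρ v + C)
    (hw : ∀ θ, 0 ≤ w θ) (hmom : Integrable fun θ => θ ^ 2 * (w θ * Real.exp (-ρ θ)))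
    (hwell : ∀ Y : Fin n → ℝ, Integrable (fun t => w t * Real.exp (-∑ j, ρ (Y j - t))) ∧
      0 < ∫ t, w t * Real.exp (-∑ j, ρ (Y j - t)))
    (hm : 2 * m < n) :
    ∃ B ≠ ⊤, ∀ Y ∈ hammingBall X m, ∫⁻ θ, ENNReal.ofReal (θ ^ 2) ∂locPostMeasure ρ w Y ≤ B := by
  refine ⟨ENNReal.ofReal (Real.exp (∑ j, ρ (X j) + 3 * n * C) /
    (∫ t, w t * Real.exp (-∑ j, ρ (X j - t))) * ∫ θ, θ ^ 2 * (w θ * Real.exp (-ρ θ))),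
    ofReal_ne_top, fun Y hY => ?_⟩
  obtain ⟨S, hS, hYX⟩ := mem_hammingBall_iff.1 hY
  set T := ∑ j ∈ S, ρ (Y j - X j)
  have h := lintegral_sq_locPostMeasure_le (a := T - (∑ j, ρ (X j) + 2 * n * C))
    (b := T + n * C) hw hmom (hwell X).1 (hwell X).2 (hwell Y).1
    (fun θ => by linarith [le_sum_sub hsub heven hnn hC hYX (by omega) θ])
    (fun θ => by linarith [sum_sub_le_sum_sub_add hsub hC hYX θ])
  rwa [show T + n * C - (T - (∑ j, ρ (X j) + 2 * n * C)) = ∑ j, ρ (X j) + 3 * n * C by ring] at h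

lemma supW2_ne_top {C : ℝ} (hnn : ∀ x, 0 ≤ ρ x) (heven : ∀ x, ρ (-x) = ρ x) (hC : 0 ≤ C)
    (hsub : ∀ u v, ρ (u + v) ≤ ρ u + ρ v + C) (hw : ∀ θ, 0 ≤ w θ)
    (hmom : Integrable fun θ => θ ^ 2 * (w θ * Real.exp (-ρ θ)))
    (hwell : ∀ Y : Fin n → ℝ, Integrable (fun t => w t * Real.exp (-∑ j, ρ (Y j - t))) ∧
      0 < ∫ t, w t * Real.exp (-∑ j, ρ (Y j - t)))
    (hm : 2 * m < n) : supW2 ρ w X m ≠ ⊤ := by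
  obtain ⟨B, hB, hbound⟩ :=
    exists_lintegral_sq_locPostMeasure_le (X := X) hnn heven hC hsub hw hmom hwell hm
  have hX : X ∈ hammingBall X m := mem_hammingBall_iff.2 ⟨∅, by simp, fun _ _ => rfl⟩
  refine ne_top_of_le_ne_top (ENNReal.rpow_ne_top_of_nonneg (by norm_num : (0 : ℝ) ≤ 1 / 2)
    (ENNReal.mul_ne_top (by norm_num : (4 : ℝ≥0∞) ≠ ⊤) hB)) (iSup₂_le fun Y hY => ?_)
  have := isProbabilityMeasure_locPostMeasure hw (hwell Y).1 (hwell Y).2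
  have := isProbabilityMeasure_locPostMeasure hw (hwell X).1 (hwell X).2
  exact W2_le_of_lintegral_sq_le (hbound Y hY) (hbound X hX)

lemma supW2_eq_top (heven : ∀ x, ρ (-x) = ρ x) (hw : ∀ θ, w θ = 1)
    (hwell : ∀ Y : Fin n → ℝ, Integrable (fun t => w t * Real.exp (-∑ j, ρ (Y j - t))) ∧
      0 < ∫ t, w t * Real.exp (-∑ j, ρ (Y j - t)))
    (hm : n ≤ 2 * m) : supW2 ρ w X m = ⊤ := by
  have hw0 : ∀ θ, 0 ≤ w θ := fun θ => (hw θ).symm ▸ zero_le_one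
  have := isProbabilityMeasure_locPostMeasure hw0 (hwell X).1 (hwell X).2
  obtain ⟨t, ht⟩ := exists_measure_Ioi_le (locPostMeasure ρ w X) (ε := 4⁻¹) (by simp)
  refine ENNReal.eq_top_of_forall_nnreal_le fun r => ?_
  set c := t + 2 * r
  set Y := reflectSample X (n - m) c
  have := isProbabilityMeasure_locPostMeasure hw0 (hwell Y).1 (hwell Y).2
  have hsymm : locPostMeasure ρ w Y (Iic c) = locPostMeasure ρ w Y (Ici c) :=
    withDensity_Iic_eq_Ici fun θ => by
      rw [locPostDensity_reflect heven (fun θ => by rw [hw, hw]) Fin.revPerm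
        (reflectSample_rev X (by omega) c)]
  calc (r : ℝ≥0∞) = ENNReal.ofReal ((c - t) / 2) := by simp [c]
    _ ≤ W2 (locPostMeasure ρ w Y) (locPostMeasure ρ w X) :=
      ofReal_half_sub_le_W2 (by simp [c]) (inv_two_le_measure_Ici hsymm) ht
    _ ≤ supW2 ρ w X m := le_iSup₂ (f := fun Y _ => W2 (locPostMeasure ρ w Y) (locPostMeasure ρ w X))
      Y (reflectSample_mem_hammingBall X c)

end Breakdown

theorem breakdown_point_redescending_general
    (ρ ψ : ℝ → ℝ)
    (hnn : ∀ x, 0 ≤ ρ x) (heven : ∀ x, ρ (-x) = ρ x)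
    (hmono : MonotoneOn ρ (Set.Ici 0))
    (hderiv : ∀ x, HasDerivAt ρ (ψ x) x)
    (x₀ : ℝ)
    (hψdown : AntitoneOn ψ (Set.Ioi x₀))
    (w : ℝ → ℝ) (hw : ∀ θ, 0 ≤ w θ)
    (hmom : Integrable (fun θ : ℝ => θ ^ 2 * (w θ * Real.exp (-ρ θ))))
    (n : ℕ) (X : Fin n → ℝ)
    (hwell : ∀ Y : Fin n → ℝ,
      Integrable (fun t : ℝ => w t * Real.exp (-∑ j, ρ (Y j - t))) ∧
      0 < ∫ t : ℝ, w t * Real.exp (-∑ j, ρ (Y j - t))) :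
    (∀ m ≤ n, 2 * m < n → supW2 ρ w X m ≠ ⊤) ∧
    ((∀ θ, w θ = 1) → ∀ m ≤ n,
      (2 * m < n → supW2 ρ w X m ≠ ⊤) ∧ (n ≤ 2 * m → supW2 ρ w X m = ⊤)) := by
  obtain ⟨C, hC, hsub⟩ := exists_add_le_add_add_const hnn heven hmono hderiv hψdown
  have robust : ∀ m ≤ n, 2 * m < n → supW2 ρ w X m ≠ ⊤ := fun _ _ hm =>
    supW2_ne_top hnn heven hC hsub hw hmom hwell hm
  exact ⟨robust, fun hflat m hmn => ⟨robust m hmn, supW2_eq_top heven hflat hwell⟩⟩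

/-- **Breakdown point of redescending M-posteriors.**
For an even loss vanishing at `0`, nondecreasing on `[0,∞)`, tending to `∞` sublinearly, with
continuous derivative that first increases and then decreases, and a (possibly improper) prior
with `∫ θ² π(θ) e^{−ρ(θ)} dθ < ∞` whose location M-posterior is well defined for every sample:
the posterior cannot be broken with `2m < n` corrupted points (breakdown point `≥ 1/2`), and
with the improper flat prior `π ≡ 1` the breakdown point equals `1/2`. -/
theorem breakdown_point_redescending
    (ρ ψ : ℝ → ℝ)
    (hnn : ∀ x, 0 ≤ ρ x) (heven : ∀ x, ρ (-x) = ρ x) (hρ0 : ρ 0 = 0)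
    (hmono : MonotoneOn ρ (Set.Ici 0))
    (htop : Tendsto ρ atTop atTop)
    (hsublin : Tendsto (fun x => ρ x / x) atTop (nhds 0))
    (hderiv : ∀ x, HasDerivAt ρ (ψ x) x) (hψcont : Continuous ψ)
    (x₀ : ℝ) (hx₀ : 0 < x₀)
    (hψup : MonotoneOn ψ (Set.Ioo 0 x₀)) (hψdown : AntitoneOn ψ (Set.Ioi x₀))
    (w : ℝ → ℝ) (hw : ∀ θ, 0 ≤ w θ)
    (hmom : Integrable (fun θ : ℝ => θ ^ 2 * (w θ * Real.exp (-ρ θ))))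
    (n : ℕ) (hn : 0 < n) (X : Fin n → ℝ)
    (hwell : ∀ Y : Fin n → ℝ,
      Integrable (fun t : ℝ => w t * Real.exp (-∑ j, ρ (Y j - t))) ∧
      0 < ∫ t : ℝ, w t * Real.exp (-∑ j, ρ (Y j - t))) :
    (∀ m ≤ n, 2 * m < n → supW2 ρ w X m ≠ ⊤) ∧
    ((∀ θ, w θ = 1) → ∀ m ≤ n,
      (2 * m < n → supW2 ρ w X m ≠ ⊤) ∧ (n ≤ 2 * m → supW2 ρ w X m = ⊤)) :=
  breakdown_point_redescending_general ρ ψ hnn heven hmono hderiv x₀ hψdown w hw hmom n X hwell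
end

section
/- Breakdown point of posterior quantiles dominates the posterior breakdown point: Let ρ be a loss, π a prior, and suppose that for every sample X̃^n ∈ ℝ^n the location M-posterior π_n^ρ(·|F̃_n) is well defined with finite variance. For τ ∈ (0,1), let T_τ(X̃^n) := inf{t : ∫_{−∞}^{t} π_n^ρ(θ'|F̃_n)dθ' ≥ τ} be the left τ-quantile of the M-posterior. Then for every τ ∈ (0,1), ε*(T_τ, X^n) ≥ ε*_{W2}(π_n^ρ, X^n); that is, for every m ≤ n, if sup_{X̃∈B_H(X^n,m)} W_2(π_n^ρ(·|F̃_n), π_n^ρ(·|F_n)) < ∞, then sup_{X̃∈B_H(X^n,m)} |T_τ(X̃^n) − T_τ(X^n)| < ∞. -/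
open MeasureTheory ENNReal

open MeasureTheory ENNReal

/-- The left `τ`-quantile of the location M-posterior. -/
noncomputable def postQuantile (ρ w : ℝ → ℝ) {n : ℕ} (τ : ℝ) (Y : Fin n → ℝ) : ℝ :=
  sInf {t : ℝ | τ ≤ ∫ θ in Set.Iic t, locPostDensity ρ w Y θ}
/-!
A bounded `W₂`-distance to the clean posterior bounds the second moment of every corrupted
posterior uniformly: for any coupling `γ`, `x² ≤ 2(x - y)² + 2y²` integrates to
`∫ x² dπ_Y ≤ 2 W₂(π_Y, π_X)² + 2 ∫ y² dπ_X`. By Chebyshev, a uniform second-moment bound `B`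
leaves mass `< min(τ, 1 - τ)` outside `[-A, A]` once `A² > B / min(τ, 1 - τ)`, which traps every
left `τ`-quantile in `[-A, A]`.
-/

section Wasserstein

lemma W2_sq (P Q : Measure ℝ) :
    W2 P Q ^ 2 = ⨅ (γ : Measure (ℝ × ℝ)) (_ : γ.map Prod.fst = P ∧ γ.map Prod.snd = Q),
      ∫⁻ z, ENNReal.ofReal ((z.1 - z.2) ^ 2) ∂γ := by
  rw [W2, ← ENNReal.rpow_natCast, ← ENNReal.rpow_mul]
  norm_num

lemma lintegral_sq_le_of_coupling {P Q : Measure ℝ} {γ : Measure (ℝ × ℝ)}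
    (hP : γ.map Prod.fst = P) (hQ : γ.map Prod.snd = Q) :
    ∫⁻ x, ENNReal.ofReal (x ^ 2) ∂P ≤
      2 * ∫⁻ z, ENNReal.ofReal ((z.1 - z.2) ^ 2) ∂γ + 2 * ∫⁻ y, ENNReal.ofReal (y ^ 2) ∂Q := by
  have hsq : Measurable fun x : ℝ => ENNReal.ofReal (x ^ 2) :=
    (measurable_id.pow_const 2).ennreal_ofReal
  have hdiff : Measurable fun z : ℝ × ℝ => ENNReal.ofReal ((z.1 - z.2) ^ 2) :=
    ((measurable_fst.sub measurable_snd).pow_const 2).ennreal_ofReal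
  have hsnd : Measurable fun z : ℝ × ℝ => ENNReal.ofReal (z.2 ^ 2) :=
    (measurable_snd.pow_const 2).ennreal_ofReal
  subst hP hQ
  rw [lintegral_map hsq measurable_fst, lintegral_map hsq measurable_snd,
    ← lintegral_const_mul 2 hdiff, ← lintegral_const_mul 2 hsnd,
    ← lintegral_add_left (hdiff.const_mul 2)]
  refine lintegral_mono fun z => ?_
  have h : z.1 ^ 2 ≤ 2 * (z.1 - z.2) ^ 2 + 2 * z.2 ^ 2 := by
    nlinarith [sq_nonneg (z.1 - 2 * z.2)]
  calc ENNReal.ofReal (z.1 ^ 2)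
      ≤ ENNReal.ofReal (2 * (z.1 - z.2) ^ 2 + 2 * z.2 ^ 2) := ENNReal.ofReal_le_ofReal h
    _ = 2 * ENNReal.ofReal ((z.1 - z.2) ^ 2) + 2 * ENNReal.ofReal (z.2 ^ 2) := by
      rw [ENNReal.ofReal_add (by positivity) (by positivity), ENNReal.ofReal_mul zero_le_two,
        ENNReal.ofReal_mul zero_le_two, ENNReal.ofReal_ofNat]

lemma lintegral_sq_le_two_mul_W2_sq_add (P Q : Measure ℝ) :
    ∫⁻ x, ENNReal.ofReal (x ^ 2) ∂P ≤
      2 * W2 P Q ^ 2 + 2 * ∫⁻ y, ENNReal.ofReal (y ^ 2) ∂Q := by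
  rw [W2_sq, ENNReal.mul_iInf_of_ne two_ne_zero ofNat_ne_top, ENNReal.iInf_add]
  refine le_iInf fun γ => ?_
  rw [ENNReal.mul_iInf_of_ne two_ne_zero ofNat_ne_top, ENNReal.iInf_add]
  exact le_iInf fun h => lintegral_sq_le_of_coupling h.1 h.2

end Wasserstein

section Quantile

lemma setIntegral_le_toReal_withDensity {α : Type*} [MeasurableSpace α] {μ : Measure α}
    {f : α → ℝ} (hf : Integrable f μ) {s : Set α} (hs : MeasurableSet s) :
    ∫ x in s, f x ∂μ ≤ (μ.withDensity (fun x => ENNReal.ofReal (f x)) s).toReal := by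
  rw [integral_eq_lintegral_pos_part_sub_lintegral_neg_part hf.restrict, withDensity_apply _ hs]
  exact sub_le_self _ ENNReal.toReal_nonneg

variable {μ : Measure ℝ} {f : ℝ → ℝ}

lemma measure_le_lintegral_sq_div {A : ℝ} (hA : 0 < A) {s : Set ℝ}
    (hs : ∀ x ∈ s, A ^ 2 ≤ x ^ 2) :
    μ s ≤ (∫⁻ x, ENNReal.ofReal (x ^ 2) ∂μ) / ENNReal.ofReal (A ^ 2) :=
  (measure_mono fun x hx => ENNReal.ofReal_le_ofReal (hs x hx)).trans <|
    meas_ge_le_lintegral_div (measurable_id.pow_const 2).ennreal_ofReal.aemeasurable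
      (by positivity) ENNReal.ofReal_ne_top

lemma setIntegral_le_div_sq_of_lintegral_sq_le (hf : Integrable f μ) {B : ℝ≥0∞} (hB : B ≠ ⊤)
    (hM : ∫⁻ x, ENNReal.ofReal (x ^ 2) ∂(μ.withDensity fun x => ENNReal.ofReal (f x)) ≤ B)
    {A : ℝ} (hA : 0 < A) {s : Set ℝ} (hs : MeasurableSet s) (hsA : ∀ x ∈ s, A ^ 2 ≤ x ^ 2) :
    ∫ x in s, f x ∂μ ≤ B.toReal / A ^ 2 :=
  calc ∫ x in s, f x ∂μ
      ≤ ((μ.withDensity fun x => ENNReal.ofReal (f x)) s).toReal :=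
        setIntegral_le_toReal_withDensity hf hs
    _ ≤ (B / ENNReal.ofReal (A ^ 2)).toReal := by
        gcongr
        · exact ENNReal.div_ne_top hB (by positivity)
        · exact (measure_le_lintegral_sq_div hA hsA).trans (by gcongr)
    _ = B.toReal / A ^ 2 := by rw [ENNReal.toReal_div, ENNReal.toReal_ofReal (by positivity)]

lemma abs_sInf_le_of_mem_of_forall_neg_le {S : Set ℝ} {A : ℝ} (hA : A ∈ S)
    (hlow : ∀ t ∈ S, -A ≤ t) : |sInf S| ≤ A :=
  abs_le.2 ⟨le_csInf ⟨A, hA⟩ hlow, csInf_le ⟨-A, hlow⟩ hA⟩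

lemma abs_quantile_le_of_lintegral_sq_le (hf : Integrable f μ) (hf1 : ∫ x, f x ∂μ = 1)
    {τ : ℝ} (hτ : τ ∈ Set.Ioo (0 : ℝ) 1) {B : ℝ≥0∞} (hB : B ≠ ⊤)
    (hM : ∫⁻ x, ENNReal.ofReal (x ^ 2) ∂(μ.withDensity fun x => ENNReal.ofReal (f x)) ≤ B) :
    |sInf {t : ℝ | τ ≤ ∫ x in Set.Iic t, f x ∂μ}| ≤ B.toReal / min τ (1 - τ) + 1 := by
  obtain ⟨hτ0, hτ1⟩ := hτ
  set c := min τ (1 - τ)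
  have hc : 0 < c := lt_min hτ0 (by linarith)
  set A := B.toReal / c + 1
  have hA : 1 ≤ A := le_add_of_nonneg_left (by positivity)
  have htail : B.toReal / A ^ 2 < c := by
    rw [div_lt_iff₀ (by positivity)]
    have hcA : c * A = B.toReal + c := by simp only [A]; field_simp
    nlinarith [mul_le_mul_of_nonneg_left (by nlinarith : A ≤ A ^ 2) hc.le]
  have tail : ∀ ⦃s : Set ℝ⦄, MeasurableSet s → (∀ x ∈ s, A ^ 2 ≤ x ^ 2) →
      ∫ x in s, f x ∂μ ≤ B.toReal / A ^ 2 :=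
    fun _ => setIntegral_le_div_sq_of_lintegral_sq_le hf hB hM (by positivity)
  refine abs_sInf_le_of_mem_of_forall_neg_le ?_ fun t ht => ?_
  · have hsplit := integral_add_compl (measurableSet_Iic (a := A)) hf
    rw [Set.compl_Iic, hf1] at hsplit
    have hright := tail measurableSet_Ioi fun x (hx : A < x) => by nlinarith
    have : c ≤ 1 - τ := min_le_right _ _
    show τ ≤ _
    linarith
  · by_contra! hlt
    have hleft := tail measurableSet_Iic fun x (hx : x ≤ t) => by nlinarith
    have : c ≤ τ := min_le_left _ _
    have : τ ≤ ∫ x in Set.Iic t, f x ∂μ := ht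
    linarith

lemma lintegral_sq_withDensity_lt_top (hf : AEMeasurable f μ)
    (hf2 : Integrable (fun x => x ^ 2 * f x) μ) :
    ∫⁻ x, ENNReal.ofReal (x ^ 2) ∂(μ.withDensity fun x => ENNReal.ofReal (f x)) < ⊤ := by
  have hsq : Measurable fun x : ℝ => ENNReal.ofReal (x ^ 2) :=
    (measurable_id.pow_const 2).ennreal_ofReal
  rw [lintegral_withDensity_eq_lintegral_mul₀ hf.ennreal_ofReal hsq.aemeasurable]
  convert hf2.lintegral_lt_top using 3 with x
  rw [Pi.mul_apply, mul_comm, ENNReal.ofReal_mul (sq_nonneg x)]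

end Quantile

section Posterior

variable {ρ w : ℝ → ℝ} {n : ℕ} {Y : Fin n → ℝ}

lemma integrable_locPostDensity (h : Integrable fun t => w t * Real.exp (-∑ j, ρ (Y j - t))) :
    Integrable (locPostDensity ρ w Y) :=
  h.div_const _

lemma integral_locPostDensity (h : 0 < ∫ t : ℝ, w t * Real.exp (-∑ j, ρ (Y j - t))) :
    ∫ θ, locPostDensity ρ w Y θ = 1 := by
  simp only [locPostDensity]
  rw [integral_div, div_self h.ne']

lemma lintegral_sq_locPostMeasure_le_s16 {X : Fin n → ℝ} {m : ℕ} (hY : Y ∈ hammingBall X m) :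
    ∫⁻ x, ENNReal.ofReal (x ^ 2) ∂locPostMeasure ρ w Y ≤
      2 * supW2 ρ w X m ^ 2 + 2 * ∫⁻ x, ENNReal.ofReal (x ^ 2) ∂locPostMeasure ρ w X := by
  refine (lintegral_sq_le_two_mul_W2_sq_add _ (locPostMeasure ρ w X)).trans ?_
  gcongr
  exact le_biSup (fun Z => W2 (locPostMeasure ρ w Z) (locPostMeasure ρ w X)) hY

lemma self_mem_hammingBall {α : Type*} (X : Fin n → α) (m : ℕ) : X ∈ hammingBall X m := by
  simp [hammingBall]

end Posterior

theorem breakdown_posterior_quantile_ge_general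
    (ρ w : ℝ → ℝ) (n : ℕ)
    (hwell : ∀ Y : Fin n → ℝ,
      Integrable (fun t : ℝ => w t * Real.exp (-∑ j, ρ (Y j - t))) ∧
      0 < ∫ t : ℝ, w t * Real.exp (-∑ j, ρ (Y j - t)) ∧
      Integrable (fun θ : ℝ => θ * locPostDensity ρ w Y θ) ∧
      Integrable (fun θ : ℝ => θ ^ 2 * locPostDensity ρ w Y θ))
    (τ : ℝ) (hτ : τ ∈ Set.Ioo (0 : ℝ) 1)
    (X : Fin n → ℝ) (m : ℕ)
    (hfin : supW2 ρ w X m ≠ ⊤) :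
    ∃ C : ℝ, ∀ Y ∈ hammingBall X m,
      |postQuantile ρ w τ Y - postQuantile ρ w τ X| ≤ C := by
  set B := 2 * supW2 ρ w X m ^ 2 + 2 * ∫⁻ x, ENNReal.ofReal (x ^ 2) ∂locPostMeasure ρ w X
  have hB : B ≠ ⊤ := by
    have hX := lintegral_sq_withDensity_lt_top
      (integrable_locPostDensity (hwell X).1).aemeasurable (hwell X).2.2.2
    exact ENNReal.add_ne_top.2 ⟨ENNReal.mul_ne_top ofNat_ne_top (ENNReal.pow_ne_top hfin),
      ENNReal.mul_ne_top ofNat_ne_top hX.ne⟩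
  have hq : ∀ Y ∈ hammingBall X m, |postQuantile ρ w τ Y| ≤ B.toReal / min τ (1 - τ) + 1 :=
    fun Y hY => abs_quantile_le_of_lintegral_sq_le (integrable_locPostDensity (hwell Y).1)
      (integral_locPostDensity (hwell Y).2.1) hτ hB (lintegral_sq_locPostMeasure_le_s16 hY)
  refine ⟨2 * (B.toReal / min τ (1 - τ) + 1), fun Y hY => ?_⟩
  linarith [abs_sub (postQuantile ρ w τ Y) (postQuantile ρ w τ X), hq Y hY,
    hq X (self_mem_hammingBall X m)]

/-- **Breakdown point of posterior quantiles dominates the posterior breakdown point.**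
If the location M-posterior is well defined with finite variance for every sample, then for
every `τ ∈ (0,1)` and every `m ≤ n`: if the worst-case 2-Wasserstein deviation of the posterior
over `m`-corrupted samples is finite, so is the worst-case deviation of the posterior
`τ`-quantile; i.e. `ε*(T_τ,Xⁿ) ≥ ε*_{W₂}(π_n^ρ,Xⁿ)`. -/
theorem breakdown_posterior_quantile_ge
    (ρ w : ℝ → ℝ) (n : ℕ) (hn : 0 < n)
    (hwell : ∀ Y : Fin n → ℝ,
      Integrable (fun t : ℝ => w t * Real.exp (-∑ j, ρ (Y j - t))) ∧
      0 < ∫ t : ℝ, w t * Real.exp (-∑ j, ρ (Y j - t)) ∧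
      Integrable (fun θ : ℝ => θ * locPostDensity ρ w Y θ) ∧
      Integrable (fun θ : ℝ => θ ^ 2 * locPostDensity ρ w Y θ))
    (τ : ℝ) (hτ : τ ∈ Set.Ioo (0 : ℝ) 1)
    (X : Fin n → ℝ) (m : ℕ) (hm : m ≤ n)
    (hfin : supW2 ρ w X m ≠ ⊤) :
    ∃ C : ℝ, ∀ Y ∈ hammingBall X m,
      |postQuantile ρ w τ Y - postQuantile ρ w τ X| ≤ C :=
  breakdown_posterior_quantile_ge_general ρ w n hwell τ hτ X m hfin
end
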